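/- arXiv:1906.08336 — 8 statements merged into one kernel-verified Lean document; each statement's English description precedes it below -/
import Mathlib

section
/- For every natural number n ≥ 3, the Tetranacci numbers satisfy 3·∑_{k=0}^{n} u_k² = 1 + 3·u_n·u_{n+1} − (u_{n+1} − u_{n−1})² + u_n·u_{n−2} + u_{n−2}·u_{n−3}. -/
/-!
Along any sequence obeying the tetranacci recursion, the quantity `tetraSumSqDefect u m` below is
independent of `m`: once `u (m + 5)` and `u (m + 4)` are eliminated through the recursion, its
increment vanishes identically. For the Tetranacci numbers its value is `-1`.
-/

/-- The Tetranacci numbers: u 0 = 0, u 1 = 1, u 2 = 1, u 3 = 2 and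
    u (n+4) = u (n+3) + u (n+2) + u (n+1) + u n. -/
def tetra : ℕ → ℤ
  | 0 => 0
  | 1 => 1
  | 2 => 1
  | 3 => 2
  | n + 4 => tetra (n + 3) + tetra (n + 2) + tetra (n + 1) + tetra n

open Finset

section TetranacciRecursion

variable {R : Type*} [CommRing R]

def tetraSumSqDefect (u : ℕ → R) (m : ℕ) : R :=
  3 * u (m + 3) * u (m + 4) - (u (m + 4) - u (m + 2)) ^ 2 + u (m + 3) * u (m + 1)
    + u (m + 1) * u m - 3 * ∑ k ∈ range (m + 4), u k ^ 2

theorem tetraSumSqDefect_succ {u : ℕ → R}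
    (hu : ∀ n, u (n + 4) = u (n + 3) + u (n + 2) + u (n + 1) + u n) (m : ℕ) :
    tetraSumSqDefect u (m + 1) = tetraSumSqDefect u m := by
  unfold tetraSumSqDefect
  rw [sum_range_succ _ (m + 4), hu (m + 1), hu m]
  ring

theorem tetraSumSqDefect_eq_tetraSumSqDefect_zero {u : ℕ → R}
    (hu : ∀ n, u (n + 4) = u (n + 3) + u (n + 2) + u (n + 1) + u n) (m : ℕ) :
    tetraSumSqDefect u m = tetraSumSqDefect u 0 := by
  induction m with
  | zero => rfl
  | succ m ih => rw [tetraSumSqDefect_succ hu, ih]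

end TetranacciRecursion

theorem tetra_add_four (n : ℕ) :
    tetra (n + 4) = tetra (n + 3) + tetra (n + 2) + tetra (n + 1) + tetra n :=
  rfl

theorem tetraSumSqDefect_tetra (m : ℕ) : tetraSumSqDefect tetra m = -1 := by
  rw [tetraSumSqDefect_eq_tetraSumSqDefect_zero tetra_add_four]
  decide

theorem sum_sq_tetra_general (n : ℕ) :
    3 * ∑ k ∈ Finset.range (n + 1), (tetra k) ^ 2 =
      1 + 3 * tetra n * tetra (n + 1) - (tetra (n + 1) - tetra (n - 1)) ^ 2
        + tetra n * tetra (n - 2) + tetra (n - 2) * tetra (n - 3) := by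
  rcases lt_or_ge n 3 with hn | hn
  · -- the truncated subtractions read `tetra 0` here; the identity still holds
    interval_cases n <;> decide
  · obtain ⟨m, rfl⟩ := Nat.exists_eq_add_of_le' hn
    have h := tetraSumSqDefect_tetra m
    rw [tetraSumSqDefect] at h
    simp only [Nat.add_sub_cancel, show m + 3 - 1 = m + 2 by omega,
      show m + 3 - 2 = m + 1 by omega]
    linear_combination -h

theorem sum_sq_tetra (n : ℕ) (hn : 3 ≤ n) :
    3 * ∑ k ∈ Finset.range (n + 1), (tetra k) ^ 2 =
      1 + 3 * tetra n * tetra (n + 1) - (tetra (n + 1) - tetra (n - 1)) ^ 2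
        + tetra n * tetra (n - 2) + tetra (n - 2) * tetra (n - 3) :=
  sum_sq_tetra_general n
end

section
/- In the ring of formal power series ℤ⟦z⟧, the generating function of the squares of the Tetranacci numbers satisfies (1 − 2z − 4z² − 6z³ − 12z⁴ + 4z⁵ + 6z⁶ + 2z⁸ − z¹⁰) · ∑_{n≥0} u_n² z^n = z − z² − 2z³ − 2z⁴ − 2z⁵ + z⁶ + z⁷. -/
open PowerSeries

namespace LinearRecurrence

variable {R : Type*} [CommRing R] (E : LinearRecurrence R)

/-- The reverse `Xᵈ χ(1/X)` of the characteristic polynomial `χ` of a recurrence of order `d`. -/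
noncomputable def revCharSeries : R⟦X⟧ :=
  1 - ∑ i, C (E.coeffs i) * X ^ (E.order - i)

theorem coeff_revCharSeries_mul_mk (u : ℕ → R) (n : ℕ) :
    coeff n (E.revCharSeries * PowerSeries.mk u) =
      u n - ∑ i : Fin E.order,
        if E.order - i ≤ n then E.coeffs i * u (n - (E.order - i)) else 0 := by
  simp only [revCharSeries, sub_mul, one_mul, Finset.sum_mul, mul_assoc, map_sub, map_sum,
    coeff_C_mul, coeff_X_pow_mul', coeff_mk, mul_ite, mul_zero]

theorem coeff_revCharSeries_mul_mk_eq_zero {u : ℕ → R} (hu : E.IsSolution u) {n : ℕ}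
    (hn : E.order ≤ n) : coeff n (E.revCharSeries * PowerSeries.mk u) = 0 := by
  obtain ⟨m, rfl⟩ := Nat.exists_eq_add_of_le' hn
  rw [coeff_revCharSeries_mul_mk, hu m, sub_eq_zero]
  refine Finset.sum_congr rfl fun i _ => ?_
  rw [if_pos (by omega), show m + E.order - (E.order - i) = m + i by omega]

end LinearRecurrence

/-- The characteristic polynomial is `∏_{i ≤ j} (x - αᵢ αⱼ)`, where the `αᵢ` are the roots of
`x⁴ - x³ - x² - x - 1`. -/
def tetraSqRecurrence : LinearRecurrence ℤ := ⟨10, ![1, 0, -2, 0, -6, -4, 12, 6, 4, 2]⟩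

theorem isSolution_tetra_sq : tetraSqRecurrence.IsSolution (fun n => tetra n ^ 2) := by
  intro n
  rw [tetraSqRecurrence]
  simp only [Fin.sum_univ_succ, Fin.sum_univ_zero, Matrix.cons_val_zero, Matrix.cons_val_succ,
    Fin.val_zero, Fin.val_succ, zero_add, Nat.reduceAdd, add_zero]
  simp only [tetra]
  ring

theorem tetraSqRecurrence_revCharSeries :
    tetraSqRecurrence.revCharSeries = (1 - 2 * X - 4 * X ^ 2 - 6 * X ^ 3 - 12 * X ^ 4
      + 4 * X ^ 5 + 6 * X ^ 6 + 2 * X ^ 8 - X ^ 10 : ℤ⟦X⟧) := by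
  rw [LinearRecurrence.revCharSeries, tetraSqRecurrence]
  simp only [Fin.sum_univ_succ, Fin.sum_univ_zero, Matrix.cons_val_zero, Matrix.cons_val_succ,
    Fin.val_zero, Fin.val_succ, map_neg, map_ofNat, map_one, map_zero, zero_add,
    Nat.reduceAdd, Nat.reduceSub]
  ring

open PowerSeries in
theorem tetra_sq_genfun :
    (1 - 2 * X - 4 * X ^ 2 - 6 * X ^ 3 - 12 * X ^ 4 + 4 * X ^ 5 + 6 * X ^ 6
        + 2 * X ^ 8 - X ^ 10 : PowerSeries ℤ)
      * PowerSeries.mk (fun n => (tetra n) ^ 2)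
    = X - X ^ 2 - 2 * X ^ 3 - 2 * X ^ 4 - 2 * X ^ 5 + X ^ 6 + X ^ 7 := by
  -- writing `2` as `C 2` lets `coeff_C_mul_X_pow` read off the coefficients of the right side
  rw [← tetraSqRecurrence_revCharSeries, ← map_ofNat (C (R := ℤ)) 2]
  ext n
  simp only [map_sub, map_add, coeff_C_mul_X_pow, coeff_X_pow, coeff_X]
  rcases lt_or_ge n 10 with hn | hn
  · rw [LinearRecurrence.coeff_revCharSeries_mul_mk, tetraSqRecurrence]
    interval_cases n <;> simp [Fin.sum_univ_succ, tetra]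
  · rw [LinearRecurrence.coeff_revCharSeries_mul_mk_eq_zero _ isSolution_tetra_sq hn]
    split_ifs <;> omega
end

section
/- In the ring of formal power series ℤ⟦z⟧, the Tetranacci numbers satisfy (1 − 2z − 4z² − 6z³ − 12z⁴ + 4z⁵ + 6z⁶ + 2z⁸ − z¹⁰) · ∑_{n≥0} u_n u_{n+2} z^n = 2z. -/
open Finset PowerSeries

theorem PowerSeries.coeff_ofNat_mul {R : Type*} [Semiring R] {a : ℕ} [a.AtLeastTwo] (n : ℕ)
    (φ : R⟦X⟧) : coeff n (ofNat(a) * φ) = ofNat(a) * coeff n φ := by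
  rw [← map_ofNat C, coeff_C_mul]

section MulMk

variable {R : Type*} [Semiring R]

theorem PowerSeries.coeff_mul_mk_eq_sum_range (q : R⟦X⟧) (f : ℕ → R) (n : ℕ) :
    coeff n (q * mk f) = ∑ i ∈ range (n + 1), coeff i q * f (n - i) := by
  simp [coeff_mul, Nat.sum_antidiagonal_eq_sum_range_succ_mk]

theorem PowerSeries.coeff_mul_mk_eq_sum_range_of_le {q : R⟦X⟧} {d : ℕ}
    (hq : ∀ i, d < i → coeff i q = 0) (f : ℕ → R) {n : ℕ} (hn : d ≤ n) :
    coeff n (q * mk f) = ∑ i ∈ range (d + 1), coeff i q * f (n - i) := by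
  rw [coeff_mul_mk_eq_sum_range]
  refine (sum_subset (range_subset_range.2 (by omega)) fun i _ hi => ?_).symm
  rw [hq i (by simpa using hi), zero_mul]

end MulMk

theorem mul_add_two_recurrence_of_tetranacci {R : Type*} [CommRing R] {u : ℕ → R}
    (hu : ∀ n, u (n + 4) = u (n + 3) + u (n + 2) + u (n + 1) + u n) (n : ℕ) :
    u (n + 10) * u (n + 12)
      = 2 * (u (n + 9) * u (n + 11)) + 4 * (u (n + 8) * u (n + 10))
        + 6 * (u (n + 7) * u (n + 9)) + 12 * (u (n + 6) * u (n + 8))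
        - 4 * (u (n + 5) * u (n + 7)) - 6 * (u (n + 4) * u (n + 6))
        - 2 * (u (n + 2) * u (n + 4)) + u n * u (n + 2) := by
  simp only [hu]
  ring

open PowerSeries in
theorem tetra_shifted_genfun :
    (1 - 2 * X - 4 * X ^ 2 - 6 * X ^ 3 - 12 * X ^ 4 + 4 * X ^ 5 + 6 * X ^ 6
        + 2 * X ^ 8 - X ^ 10 : PowerSeries ℤ)
      * PowerSeries.mk (fun n => tetra n * tetra (n + 2))
    = 2 * X := by
  ext n
  rcases lt_or_ge n 10 with hn | hn
  · rw [coeff_mul_mk_eq_sum_range]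
    interval_cases n <;>
      simp [sum_range_succ, coeff_X_pow, coeff_one, coeff_X, coeff_ofNat_mul, tetra]
  obtain ⟨m, rfl⟩ := Nat.exists_eq_add_of_le' hn
  have hq : ∀ i, 10 < i → coeff i (1 - 2 * X - 4 * X ^ 2 - 6 * X ^ 3 - 12 * X ^ 4 + 4 * X ^ 5
      + 6 * X ^ 6 + 2 * X ^ 8 - X ^ 10 : PowerSeries ℤ) = 0 := by
    intro i hi
    simp [coeff_X_pow, coeff_one, coeff_X, coeff_ofNat_mul]
    omega
  rw [coeff_mul_mk_eq_sum_range_of_le hq _ hn]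
  simp only [sum_range_succ, sum_range_zero, map_sub, map_add, coeff_one, coeff_X, coeff_X_pow,
    coeff_ofNat_mul, Nat.reduceEqDiff, Nat.reduceSubDiff, reduceIte]
  linear_combination mul_add_two_recurrence_of_tetranacci (u := tetra) (fun _ => rfl) m
end

section
/- For every natural number n ≥ 9, the Tetranacci numbers satisfy 6·∑_{k=0}^{n} u_k² = 2 + 2·u_n u_{n+2} + u_{n−1} u_{n+1} − u_{n−2} u_n − u_{n−3} u_{n−1} + 5·u_{n−4} u_{n−2} + 4·u_{n−5} u_{n−3} + u_{n−6} u_{n−4} + u_{n−7} u_{n−5} − u_{n−8} u_{n−6} − u_{n−9} u_{n−7}. -/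
open Finset

section Recurrence

variable {R : Type*} [CommRing R] {u : ℕ → R}

/-- The quadratic form of the theorem at `n = m + 9`; indexing by `m` avoids truncated
subtraction. -/
def tetraSqSumForm (u : ℕ → R) (m : ℕ) : R :=
  2 * u (m + 9) * u (m + 11) + u (m + 8) * u (m + 10)
    - u (m + 7) * u (m + 9) - u (m + 6) * u (m + 8)
    + 5 * u (m + 5) * u (m + 7) + 4 * u (m + 4) * u (m + 6)
    + u (m + 3) * u (m + 5) + u (m + 2) * u (m + 4)
    - u (m + 1) * u (m + 3) - u m * u (m + 2)

theorem tetraSqSumForm_succ_sub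
    (hu : ∀ n, u (n + 4) = u (n + 3) + u (n + 2) + u (n + 1) + u n) (m : ℕ) :
    tetraSqSumForm u (m + 1) - tetraSqSumForm u m = 6 * u (m + 10) ^ 2 := by
  simp only [tetraSqSumForm, hu]
  ring

theorem six_mul_sum_sq_eq_add_tetraSqSumForm
    (hu : ∀ n, u (n + 4) = u (n + 3) + u (n + 2) + u (n + 1) + u n) (m : ℕ) :
    6 * ∑ k ∈ range (m + 10), u k ^ 2
      = (6 * ∑ k ∈ range 10, u k ^ 2 - tetraSqSumForm u 0) + tetraSqSumForm u m := by
  induction m with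
  | zero => ring
  | succ m ih =>
    rw [show m + 1 + 10 = m + 10 + 1 by omega, sum_range_succ, mul_add, ih,
      ← sub_add_cancel (tetraSqSumForm u (m + 1)) (tetraSqSumForm u m),
      tetraSqSumForm_succ_sub hu]
    ring

end Recurrence

theorem sum_sq_tetra_alt (n : ℕ) (hn : 9 ≤ n) :
    6 * ∑ k ∈ Finset.range (n + 1), (tetra k) ^ 2 =
      2 + 2 * tetra n * tetra (n + 2) + tetra (n - 1) * tetra (n + 1)
        - tetra (n - 2) * tetra n - tetra (n - 3) * tetra (n - 1)
        + 5 * tetra (n - 4) * tetra (n - 2) + 4 * tetra (n - 5) * tetra (n - 3)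
        + tetra (n - 6) * tetra (n - 4) + tetra (n - 7) * tetra (n - 5)
        - tetra (n - 8) * tetra (n - 6) - tetra (n - 9) * tetra (n - 7) := by
  obtain ⟨m, rfl⟩ : ∃ m, n = m + 9 := ⟨n - 9, by omega⟩
  have hconst : 6 * ∑ k ∈ range 10, tetra k ^ 2 - tetraSqSumForm tetra 0 = 2 := by decide
  refine (six_mul_sum_sq_eq_add_tetraSqSumForm (fun _ => rfl) m).trans ?_
  rw [hconst, tetraSqSumForm]
  simp only [Nat.reduceSubDiff, Nat.add_sub_cancel]
  ring
end

section
/- In the ring of formal power series ℤ⟦z⟧, the Pentanacci numbers satisfy (1 − 2z − 4z² − 7z³ − 14z⁴ − 28z⁵ + 4z⁶ + 6z⁷ + 4z⁹ + 10z¹⁰ − z¹² − z¹⁵) · ∑_{n≥0} v_n v_{n+3} z^n = 4z. -/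
/-!
If `u` satisfies the Pentanacci recurrence, whose characteristic roots are `α₁, …, α₅`, then
`u n * u (n + 3)` is a linear combination of the sequences `(αᵢ αⱼ) ^ n` with `i ≤ j`, so it
satisfies the linear recurrence of order 15 whose reversed characteristic polynomial
`∏_{i ≤ j} (1 - αᵢ αⱼ z)` is the polynomial of the theorem. Multiplying the generating function
by it therefore leaves a polynomial of degree below 15, read off from the first terms of `penta`.
-/

/-- The Pentanacci numbers: v 0 = 0, v 1 = 1, v 2 = 1, v 3 = 2, v 4 = 4 and
    v (n+5) = v (n+4) + v (n+3) + v (n+2) + v (n+1) + v n. -/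
def penta : ℕ → ℤ
  | 0 => 0
  | 1 => 1
  | 2 => 1
  | 3 => 2
  | 4 => 4
  | n + 5 => penta (n + 4) + penta (n + 3) + penta (n + 2) + penta (n + 1) + penta n

theorem penta_add_five (n : ℕ) :
    penta (n + 5) = penta (n + 4) + penta (n + 3) + penta (n + 2) + penta (n + 1) + penta n :=
  rfl

/- Substituting the recurrence all the way down to `u m, …, u (m + 4)` gives terms too large for
`ring`; `grind` instead reduces the goal modulo the fourteen linear relations. -/
theorem pentanacci_mul_add_three_recurrence {R : Type*} [CommRing R] {u : ℕ → R}
    (hu : ∀ n, u (n + 5) = u (n + 4) + u (n + 3) + u (n + 2) + u (n + 1) + u n) (m : ℕ) :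
    u (m + 15) * u (m + 18) = 2 * (u (m + 14) * u (m + 17)) + 4 * (u (m + 13) * u (m + 16))
      + 7 * (u (m + 12) * u (m + 15)) + 14 * (u (m + 11) * u (m + 14))
      + 28 * (u (m + 10) * u (m + 13)) - 4 * (u (m + 9) * u (m + 12))
      - 6 * (u (m + 8) * u (m + 11)) - 4 * (u (m + 6) * u (m + 9))
      - 10 * (u (m + 5) * u (m + 8)) + u (m + 3) * u (m + 6) + u m * u (m + 3) := by
  grind [hu m, hu (m + 1), hu (m + 2), hu (m + 3), hu (m + 4), hu (m + 5), hu (m + 6),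
    hu (m + 7), hu (m + 8), hu (m + 9), hu (m + 10), hu (m + 11), hu (m + 12), hu (m + 13)]

namespace PowerSeries

variable {R : Type*} [Semiring R]

theorem coeff_ofNat_mul_s6 (k : ℕ) [k.AtLeastTwo] (n : ℕ) (φ : R⟦X⟧) :
    coeff n (ofNat(k) * φ) = ofNat(k) * coeff n φ := by
  rw [← map_ofNat C k, coeff_C_mul]

theorem coeff_X_mul' (n : ℕ) (φ : R⟦X⟧) :
    coeff n (X * φ) = if 1 ≤ n then coeff (n - 1) φ else 0 := by
  simpa using coeff_X_pow_mul' φ 1 n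

end PowerSeries

open PowerSeries in
theorem penta_shifted_genfun :
    (1 - 2 * X - 4 * X ^ 2 - 7 * X ^ 3 - 14 * X ^ 4 - 28 * X ^ 5 + 4 * X ^ 6
        + 6 * X ^ 7 + 4 * X ^ 9 + 10 * X ^ 10 - X ^ 12 - X ^ 15 : PowerSeries ℤ)
      * PowerSeries.mk (fun n => penta n * penta (n + 3))
    = 4 * X := by
  ext n
  simp only [sub_mul, add_mul, one_mul, mul_assoc, map_sub, map_add, coeff_ofNat_mul_s6,
    coeff_X_pow_mul', coeff_X_mul', coeff_mk, coeff_X, mul_ite, mul_one, mul_zero]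
  rcases lt_or_ge n 15 with hn | hn
  · interval_cases n <;> simp [penta]
  · obtain ⟨m, rfl⟩ := Nat.exists_eq_add_of_le' hn
    simp (disch := omega) only [if_pos, if_neg, Nat.reduceSubDiff]
    linear_combination pentanacci_mul_add_three_recurrence penta_add_five m
end

section
/- For every natural number h ≥ 1, the formal power series C(x) = ∑_{n≥0} (−1/((h+1)n − 1)) · binom(((h+1)n − 1)/h, n) · x^n in ℚ⟦x⟧, where binom(q, n) = q(q−1)⋯(q−n+1)/n! is the generalized binomial coefficient of the rational number q, satisfies C(x)^{h+1} − C(x) + x = 0. (In particular the constant coefficient of C is 1, coming from the n = 0 term.) -/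
/-!
Write `𝓑_t(x)^r = ∑ₖ A_r(k) xᵏ`. Pascal's rule gives `A_{r+1}(k+1) - A_r(k+1) = A_{r+t}(k)`,
i.e. `𝓑_t^{r+1} - 𝓑_t^r = x 𝓑_t^{r+t}`. The same recursion proves the exponent law
`𝓑_t^r 𝓑_t^s = 𝓑_t^{r+s}` by induction on the degree: the difference of the two sides is a
polynomial in `r` that is `1`-periodic and vanishes at `r = 0`. For `t = (h+1)/h` we have
`C = 𝓑_t^{1-t}`, hence `C^{h+1} = 𝓑_t^{-t}`, and the functional equation at `r = -t` reads
`C - C^{h+1} = x 𝓑_t^0 = x`.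
-/

/-- The generalized binomial coefficient binom(q, n) = q(q-1)⋯(q-n+1)/n! for a
    rational number `q` and a natural number `n`. -/
def qbinom (q : ℚ) (n : ℕ) : ℚ :=
  (∏ i ∈ Finset.range n, (q - i)) / (Nat.factorial n : ℚ)

open Finset

theorem qbinom_eq_choose (q : ℚ) (n : ℕ) : qbinom q n = Ring.choose q n := by
  rw [Ring.choose_eq_smul, ← Polynomial.aeval_eq_smeval, Polynomial.aeval_def,
    ← Polynomial.eval_map, descPochhammer_map, descPochhammer_eval_eq_prod_range, qbinom,
    smul_eq_mul, div_eq_inv_mul]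

theorem Ring.succ_mul_choose_succ {R : Type*} [CommRing R] [BinomialRing R] (r : R) (k : ℕ) :
    ((k : R) + 1) * choose r (k + 1) = r * choose (r - 1) k := by
  simpa [Nat.cast_smul_eq_nsmul] using choose_smul_choose r (Nat.le_add_left 1 k)

theorem Polynomial.eq_C_of_periodic {K : Type*} [Field K] [CharZero K] {p : Polynomial K}
    (hp : Function.Periodic p.eval 1) : p = C (p.eval 0) := by
  refine eq_of_infinite_eval_eq _ _ (Set.infinite_range_of_injective Nat.cast_injective |>.mono ?_)
  rintro _ ⟨m, rfl⟩
  simpa using hp.nat_mul_eq m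

section BinomialRing

variable {R : Type*} [CommRing R] [BinomialRing R]

/-- The coefficients `binom(t k + r, k) * r / (t k + r)` of `𝓑_t(x)^r`, written without the
division, which makes sense also when `t k + r = 0`. -/
def genBinomCoeff (t r : R) : ℕ → R
  | 0 => 1
  | k + 1 => Ring.choose (r + (k + 1) * t) (k + 1) - t * Ring.choose (r + (k + 1) * t - 1) k

@[simp]
theorem genBinomCoeff_zero (t r : R) : genBinomCoeff t r 0 = 1 := rfl

theorem map_genBinomCoeff {S : Type*} [CommRing S] [BinomialRing S] (f : R →+* S) (t r : R)
    (k : ℕ) : f (genBinomCoeff t r k) = genBinomCoeff (f t) (f r) k := by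
  cases k <;> simp [genBinomCoeff, Ring.map_choose]

theorem genBinomCoeff_add_one_sub (t r : R) (k : ℕ) :
    genBinomCoeff t (r + 1) (k + 1) - genBinomCoeff t r (k + 1) = genBinomCoeff t (r + t) k := by
  cases k with
  | zero => simp [genBinomCoeff]
  | succ k =>
    simp only [genBinomCoeff]
    push_cast
    set q := r + (k + 1 + 1) * t
    have pascal₁ := Ring.choose_succ_succ q (k + 1)
    have pascal₂ := Ring.choose_succ_succ (q - 1) k
    rw [sub_add_cancel] at pascal₂
    rw [show r + 1 + (k + 1 + 1) * t = q + 1 by ring, show r + t + (k + 1) * t = q by ring,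
      add_sub_cancel_right]
    linear_combination pascal₁ - t * pascal₂

end BinomialRing

section CharZero

variable {K : Type*} [Field K] [CharZero K]

theorem genBinomCoeff_eq_div_mul_choose (t r : K) (n : ℕ) (hn : r + n * t ≠ 0) :
    genBinomCoeff t r n = r / (r + n * t) * Ring.choose (r + n * t) n := by
  cases n with
  | zero => simp_all
  | succ k =>
    have absorb := Ring.succ_mul_choose_succ (r + (k + 1) * t) k
    push_cast at hn ⊢
    rw [genBinomCoeff, div_mul_eq_mul_div, eq_div_iff hn]
    linear_combination t * absorb

theorem genBinomCoeff_zero_left (t : K) (k : ℕ) : genBinomCoeff t 0 (k + 1) = 0 := by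
  have absorb := Ring.succ_mul_choose_succ ((k + 1) * t) k
  refine (mul_eq_zero.mp ?_).resolve_left (Nat.cast_add_one_ne_zero k)
  rw [genBinomCoeff, zero_add]
  linear_combination absorb

open Polynomial in
theorem sum_antidiagonal_genBinomCoeff_mul (t s : K) (n : ℕ) (r : K) :
    ∑ p ∈ antidiagonal n, genBinomCoeff t r p.1 * genBinomCoeff t s p.2 =
      genBinomCoeff t (r + s) n := by
  induction n generalizing r with
  | zero => simp
  | succ n ih =>
    let S (x : K) := ∑ p ∈ antidiagonal (n + 1), genBinomCoeff t x p.1 * genBinomCoeff t s p.2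
    -- both sides of the claim, as polynomials in `r`
    let D : K[X] :=
      ∑ p ∈ antidiagonal (n + 1), genBinomCoeff (C t) X p.1 * C (genBinomCoeff t s p.2) -
        genBinomCoeff (C t) (X + C s) (n + 1)
    have eval_D (x : K) : D.eval x = S x - genBinomCoeff t (x + s) (n + 1) := by
      simp [D, S, eval_finsetSum, ← coe_evalRingHom, map_genBinomCoeff]
      simp [coe_evalRingHom]
    have hS (x : K) : S (x + 1) - S x = genBinomCoeff t (x + s + t) n := by
      simp only [S, Nat.sum_antidiagonal_succ, genBinomCoeff_zero]
      rw [add_right_comm, ← ih, add_sub_add_left_eq_sub, ← sum_sub_distrib]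
      refine sum_congr rfl fun p _ => ?_
      rw [← sub_mul, genBinomCoeff_add_one_sub]
    have hD : Function.Periodic D.eval 1 := by
      intro x
      have := genBinomCoeff_add_one_sub t (x + s) n
      show D.eval (x + 1) = D.eval x
      rw [eval_D, eval_D, add_right_comm x 1 s]
      linear_combination hS x - this
    have hS₀ : S 0 = genBinomCoeff t s (n + 1) := by
      simp [S, Nat.sum_antidiagonal_succ, genBinomCoeff_zero_left]
    have hD_eq := eval_D r
    rw [eq_C_of_periodic hD, eval_C, eval_D, hS₀, zero_add, sub_self] at hD_eq
    exact sub_eq_zero.mp hD_eq.symm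

end CharZero

open PowerSeries

section Series

variable {R : Type*} [CommRing R] [BinomialRing R]

/-- The generalized binomial series `𝓑_t(x)^r`. -/
def genBinomSeries (t r : R) : R⟦X⟧ :=
  mk (genBinomCoeff t r)

theorem genBinomSeries_add_one_sub (t r : R) :
    genBinomSeries t (r + 1) - genBinomSeries t r = X * genBinomSeries t (r + t) := by
  ext (_ | k)
  · simp [genBinomSeries]
  · simp [genBinomSeries, genBinomCoeff_add_one_sub]

variable {K : Type*} [Field K] [CharZero K]

theorem genBinomSeries_add (t r s : K) :
    genBinomSeries t (r + s) = genBinomSeries t r * genBinomSeries t s := by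
  ext n
  simp [genBinomSeries, coeff_mul, sum_antidiagonal_genBinomCoeff_mul]

theorem genBinomSeries_zero (t : K) : genBinomSeries t 0 = 1 := by
  ext (_ | k)
  · simp [genBinomSeries]
  · simp [genBinomSeries, genBinomCoeff_zero_left, coeff_one]

theorem genBinomSeries_nsmul (t r : K) (m : ℕ) :
    genBinomSeries t (m • r) = genBinomSeries t r ^ m := by
  induction m with
  | zero => simp [genBinomSeries_zero]
  | succ m ih => rw [succ_nsmul, genBinomSeries_add, ih, pow_succ]

end Series

theorem genBinomCoeff_neg_add_one_eq_qbinom {h : ℕ} (hh : 1 ≤ h) {t : ℚ} (ht : t * h = h + 1)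
    (n : ℕ) : genBinomCoeff t (-t + 1) n =
      -1 / (((h + 1 : ℕ) : ℚ) * n - 1) * qbinom ((((h + 1 : ℕ) : ℚ) * n - 1) / h) n := by
  have hh₀ : (h : ℚ) ≠ 0 := Nat.cast_ne_zero.mpr (by omega)
  have hq : -t + 1 + n * t = (((h + 1 : ℕ) : ℚ) * n - 1) / h := by
    rw [eq_div_iff hh₀]
    push_cast
    linear_combination (n - 1 : ℚ) * ht
  have hq₀ : ((h + 1 : ℕ) : ℚ) * n - 1 ≠ 0 := by
    have hn : (h + 1) * n ≠ 1 := by rw [Ne, mul_eq_one]; omega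
    rw [sub_ne_zero]
    exact_mod_cast hn
  rw [genBinomCoeff_eq_div_mul_choose _ _ _ (hq ▸ div_ne_zero hq₀ hh₀), hq, qbinom_eq_choose,
    div_div_eq_mul_div]
  congr 2
  linear_combination -ht

open PowerSeries in
theorem generalized_binomial_series_neg_root (h : ℕ) (hh : 1 ≤ h)
    (C : PowerSeries ℚ)
    (hC : C = PowerSeries.mk fun n =>
      (-1 / (((h + 1 : ℕ) : ℚ) * n - 1))
        * qbinom ((((h + 1 : ℕ) : ℚ) * n - 1) / (h : ℚ)) n) :
    C ^ (h + 1) - C + X = 0 := by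
  have hh₀ : (h : ℚ) ≠ 0 := Nat.cast_ne_zero.mpr (by omega)
  obtain ⟨t, ht⟩ : ∃ t : ℚ, t * h = h + 1 := ⟨(h + 1) / h, div_mul_cancel₀ _ hh₀⟩
  have hC_eq : C = genBinomSeries t (-t + 1) := by
    rw [hC, genBinomSeries]
    exact congrArg mk (funext fun n => (genBinomCoeff_neg_add_one_eq_qbinom hh ht n).symm)
  have hpow : C ^ (h + 1) = genBinomSeries t (-t) := by
    rw [hC_eq, ← genBinomSeries_nsmul, nsmul_eq_mul]
    congr 1
    push_cast
    linear_combination -ht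
  have hX := genBinomSeries_add_one_sub t (-t)
  rw [neg_add_cancel, genBinomSeries_zero, mul_one] at hX
  rw [hpow, hC_eq, ← hX]
  ring
end

section
/- For all natural numbers h ≥ 1 and n ≥ 2, the identity (1/((h+1)n − 1)) · binom(((h+1)n − 1)/h, n) = (1/(n − 1)) · binom((h+1)(n − 1)/h, n) holds in ℚ, where binom(q, n) = q(q−1)⋯(q−n+1)/n! is the generalized binomial coefficient of the rational number q. -/
/-! With `q = ((h+1)n - 1)/h` the two arguments are `q` and `q - 1`. Absorption,
`binom(q, n) = q/n · binom(q-1, n-1)`, and the recurrence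
`binom(q-1, n) = (q-n)/n · binom(q-1, n-1)` reduce both sides to multiples of
`binom(q-1, n-1)`; since `(h+1)n - 1 = hq` and `q - n = (n-1)/h`, both equal
`binom(q-1, n-1)/(hn)`. -/

theorem qbinom_succ (q : ℚ) (n : ℕ) : qbinom q (n + 1) = (q - n) / (n + 1) * qbinom q n := by
  unfold qbinom
  rw [Finset.prod_range_succ, Nat.factorial_succ]
  push_cast
  field_simp

theorem qbinom_succ_eq_div_mul_qbinom_sub_one (q : ℚ) (n : ℕ) :
    qbinom q (n + 1) = q / (n + 1) * qbinom (q - 1) n := by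
  unfold qbinom
  rw [Finset.prod_range_succ', Nat.factorial_succ]
  simp only [Nat.cast_add, Nat.cast_one, Nat.cast_zero, sub_zero, sub_add_eq_sub_sub, sub_right_comm]
  push_cast
  field_simp

theorem qbinom_identity (h n : ℕ) (hh : 1 ≤ h) (hn : 2 ≤ n) :
    (1 / (((h : ℚ) + 1) * n - 1)) * qbinom ((((h : ℚ) + 1) * n - 1) / h) n
      = (1 / ((n : ℚ) - 1)) * qbinom (((h : ℚ) + 1) * ((n : ℚ) - 1) / h) n := by
  obtain ⟨m, rfl⟩ : ∃ m, n = m + 1 := ⟨n - 1, by omega⟩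
  have hh0 : (h : ℚ) ≠ 0 := by positivity
  have hm0 : (m : ℚ) ≠ 0 := by norm_cast; omega
  set q : ℚ := ((h + 1) * ((m + 1 : ℕ) : ℚ) - 1) / h with hq
  have hq_mul : ((h : ℚ) + 1) * ((m + 1 : ℕ) : ℚ) - 1 = h * q := by
    rw [hq]; field_simp
  have hq_sub_one : ((h : ℚ) + 1) * (((m + 1 : ℕ) : ℚ) - 1) / h = q - 1 := by
    rw [hq]; field_simp; ring
  have hq_sub : q - 1 - m = m / h := by
    rw [hq]; field_simp; push_cast; ring
  have hq0 : q ≠ 0 := by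
    refine right_ne_zero_of_mul (a := (h : ℚ)) ?_
    rw [← hq_mul]; push_cast; ring_nf; positivity
  rw [hq_mul, hq_sub_one, qbinom_succ_eq_div_mul_qbinom_sub_one, qbinom_succ (q - 1), hq_sub]
  simp only [Nat.cast_add, Nat.cast_one, add_sub_cancel_right]
  field_simp
end

section
/- Let h ≥ 1 be a natural number and let r_0, r_1, …, r_h be pairwise distinct nonzero complex numbers such that the polynomial factorization z^{h+1} − 2z + 1 = ∏_{i=0}^{h} (z − r_i) holds in ℂ[z]. Let (c_n)_{n≥0} be the sequence of coefficients of the formal power series (1 − 2z + z^{h+1})⁻¹ in ℂ⟦z⟧ (equivalently, c_0 = 1, c_n = 2c_{n−1} for 1 ≤ n ≤ h, and c_n = 2c_{n−1} − c_{n−h−1} for n ≥ h+1). Then for every n ≥ 0, c_n = −∑_{i=0}^{h} r_i^{−(n+1)} · ∏_{j≠i} (r_i − r_j)^{−1}. -/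
/-! Partial fractions: for distinct nodes `r i` the Lagrange basis sums to `1`, which says
`1 / ∏ (z - r i) = ∑ i, w i / (z - r i)` with `w i = ∏ j ≠ i, (r i - r j)⁻¹`; and
`1 / (z - r) = -∑ n, r ^ (-(n + 1)) z ^ n` is `invUnitsSub`. -/

open Finset

section PartialFractions

variable {K ι : Type*} [Field K] [Fintype ι] [DecidableEq ι] {r : ι → K}

theorem Lagrange.sum_C_inv_prod_sub_mul_prod_X_sub_C [Nonempty ι] (hr : Function.Injective r) :
    ∑ i, Polynomial.C (∏ j ∈ univ.erase i, (r i - r j))⁻¹ *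
      ∏ j ∈ univ.erase i, (Polynomial.X - Polynomial.C (r j)) = 1 := by
  rw [← Lagrange.sum_basis hr.injOn univ_nonempty]
  refine sum_congr rfl fun i _ => ?_
  simp only [Lagrange.basis, Lagrange.basisDivisor, prod_mul_distrib, ← map_prod, prod_inv_distrib]

open PowerSeries

theorem PowerSeries.inv_prod_X_sub_C [Nonempty ι] (hr : Function.Injective r)
    (hr0 : ∀ i, r i ≠ 0) :
    (∏ i, (X - C (r i)) : K⟦X⟧)⁻¹ =
      -∑ i, C (∏ j ∈ univ.erase i, (r i - r j))⁻¹ * invUnitsSub (Units.mk0 (r i) (hr0 i)) := by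
  have hconst : constantCoeff (∏ i, (X - C (r i)) : K⟦X⟧) ≠ 0 := by
    simpa [map_prod] using prod_ne_zero_iff.mpr fun i _ => neg_ne_zero.mpr (hr0 i)
  have hlagrange := congrArg (Polynomial.coeToPowerSeries.ringHom (R := K))
    (Lagrange.sum_C_inv_prod_sub_mul_prod_X_sub_C hr)
  simp only [map_sum, map_mul, map_prod, map_sub, map_one,
    Polynomial.coeToPowerSeries.ringHom_apply, Polynomial.coe_C, Polynomial.coe_X] at hlagrange
  rw [eq_comm, eq_inv_iff_mul_eq_one hconst, ← hlagrange, neg_mul, sum_mul, ← sum_neg_distrib]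
  refine sum_congr rfl fun i _ => ?_
  rw [← mul_prod_erase univ _ (mem_univ i)]
  have := invUnitsSub_mul_sub (Units.mk0 (r i) (hr0 i))
  simp only [Units.val_mk0] at this
  linear_combination (C (∏ j ∈ univ.erase i, (r i - r j))⁻¹ *
    ∏ j ∈ univ.erase i, (X - C (r j)) : K⟦X⟧) * this

theorem PowerSeries.coeff_inv_prod_X_sub_C [Nonempty ι] (hr : Function.Injective r)
    (hr0 : ∀ i, r i ≠ 0) (n : ℕ) :
    coeff n (∏ i, (X - C (r i)) : K⟦X⟧)⁻¹ =
      -∑ i, (r i ^ (n + 1))⁻¹ * ∏ j ∈ univ.erase i, (r i - r j)⁻¹ := by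
  simp [inv_prod_X_sub_C hr hr0, coeff_invUnitsSub, mul_comm, prod_inv_distrib]

end PartialFractions

open PowerSeries in
theorem binet_type_formula_general (h : ℕ)
    (r : Fin (h + 1) → ℂ)
    (hr0 : ∀ i, r i ≠ 0)
    (hrinj : Function.Injective r)
    (hfac : (Polynomial.X ^ (h + 1) - 2 * Polynomial.X + 1 : Polynomial ℂ)
      = ∏ i, (Polynomial.X - Polynomial.C (r i)))
    (c : ℕ → ℂ)
    (hc : ∀ n, c n = PowerSeries.coeff n
      ((1 - 2 * X + X ^ (h + 1) : PowerSeries ℂ)⁻¹))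
    (n : ℕ) :
    c n = -∑ i, (r i ^ (n + 1))⁻¹ * ∏ j ∈ Finset.univ.erase i, (r i - r j)⁻¹ := by
  have hfac' : (1 - 2 * X + X ^ (h + 1) : PowerSeries ℂ) = ∏ i, (X - C (r i)) := by
    have := congrArg (Polynomial.coeToPowerSeries.ringHom (R := ℂ)) hfac
    simp only [map_add, map_sub, map_mul, map_pow, map_one, map_prod, map_ofNat,
      Polynomial.coeToPowerSeries.ringHom_apply, Polynomial.coe_C, Polynomial.coe_X] at this
    rw [← this]
    ring
  rw [hc, hfac', coeff_inv_prod_X_sub_C hrinj hr0]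

open PowerSeries in
theorem binet_type_formula (h : ℕ) (hh : 1 ≤ h)
    (r : Fin (h + 1) → ℂ)
    (hr0 : ∀ i, r i ≠ 0)
    (hrinj : Function.Injective r)
    (hfac : (Polynomial.X ^ (h + 1) - 2 * Polynomial.X + 1 : Polynomial ℂ)
      = ∏ i, (Polynomial.X - Polynomial.C (r i)))
    (c : ℕ → ℂ)
    (hc : ∀ n, c n = PowerSeries.coeff n
      ((1 - 2 * X + X ^ (h + 1) : PowerSeries ℂ)⁻¹))
    (n : ℕ) :
    c n = -∑ i, (r i ^ (n + 1))⁻¹ * ∏ j ∈ Finset.univ.erase i, (r i - r j)⁻¹ :=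
  binet_type_formula_general h r hr0 hrinj hfac c hc n
end
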